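/- arXiv:2103.15026 — 3 statements merged into one kernel-verified Lean document; each statement's English description precedes it below -/
import Mathlib

section
/- Let R be a commutative unitary ring and let σ ∈ Σ_n have cycle type λ = (λ_1,…,λ_s) (fixed points counted as parts equal to 1). Then S_n(σ,R) is a free R-module of rank ℓ_n(σ) = Σ_{1≤i,j≤s} gcd(λ_i, λ_j). -/
open Matrix

/-- The `σ`-invariant matrix ring `S_n(σ,R) = {a ∈ M_n(R) | a_{ij} = a_{σ(i)σ(j)}}`. -/
def invariantSubring (R : Type*) [Ring R] {n : ℕ} (σ : Equiv.Perm (Fin n)) :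
    Subring (Matrix (Fin n) (Fin n) R) where
  carrier := {a | ∀ i j, a i j = a (σ i) (σ j)}
  zero_mem' := fun i j => rfl
  one_mem' := fun i j => by
    simp [Matrix.one_apply, EmbeddingLike.apply_eq_iff_eq]
  add_mem' := fun {a b} ha hb i j => by
    simp only [Matrix.add_apply]; rw [ha i j, hb i j]
  neg_mem' := fun {a} ha i j => by
    simp only [Matrix.neg_apply]; rw [ha i j]
  mul_mem' := fun {a b} ha hb i j => by
    simp only [Matrix.mul_apply]
    calc ∑ k, a i k * b k j
        = ∑ k, a (σ i) (σ k) * b (σ k) (σ j) :=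
          Finset.sum_congr rfl fun k _ => by rw [← ha, ← hb]
      _ = ∑ k, a (σ i) k * b k (σ j) := Equiv.sum_comp σ fun k => a (σ i) k * b k (σ j)

/-- `σ ∈ Σ_n` has cycle type `(lam 0, …, lam (s-1))`, where fixed points are counted
as parts equal to `1`: the multiset of lengths of the disjoint cycles of `σ`, together
with one part `1` for each fixed point, is the multiset of values of `lam`. -/
def HasFullCycleType {n s : ℕ} (σ : Equiv.Perm (Fin n)) (lam : Fin s → ℕ) : Prop :=
  σ.cycleType + Multiset.replicate (n - σ.cycleType.sum) 1 = (List.ofFn lam : Multiset ℕ)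

/-- For a commutative ring `R`, `S_n(σ,R)` as an `R`-subalgebra of `M_n(R)`. -/
def invariantSubalgebra (R : Type*) [CommRing R] {n : ℕ} (σ : Equiv.Perm (Fin n)) :
    Subalgebra R (Matrix (Fin n) (Fin n) R) where
  toSubsemiring := (invariantSubring R σ).toSubsemiring
  algebraMap_mem' := fun r i j => by
    simp [Matrix.algebraMap_matrix_apply, EmbeddingLike.apply_eq_iff_eq]

/-!
Since `σ` and the permutation of `Σ i, ZMod (lam i)` adding `1` in every block have the same
cycle type, they are conjugate. A matrix lies in `S_n(σ,R)` iff it is constant on the orbits of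
`⟨σ⟩` on pairs of indices, so `S_n(σ,R) ≅ R^{orbits}`. In the model, by the Chinese remainder
theorem, the orbits on the block pair `ZMod λ_i × ZMod λ_j` are the fibres of
`(x, y) ↦ x - y mod gcd(λ_i, λ_j)`, which gives `Σ_{i,j} gcd(λ_i, λ_j)` orbits.
-/

open Equiv Finset ZMod

namespace Equiv.Perm

section SigmaCongrRight

variable {ι : Type*} [DecidableEq ι] {β : ι → Type*}

theorem sigmaCongrRight_mulSingle (i : ι) (g : Perm (β i)) :
    sigmaCongrRight (Pi.mulSingle i g) = g.extendDomain (sigmaSubtype i).symm := by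
  ext ⟨j, b⟩ : 1
  rcases eq_or_ne j i with rfl | hji
  · refine (?_ : _ = _).trans (extendDomain_apply_image g (sigmaSubtype j).symm b).symm
    simp only [sigmaCongrRight_apply, Pi.mulSingle_eq_same]; rfl
  · rw [extendDomain_apply_not_subtype g (sigmaSubtype i).symm (b := ⟨j, b⟩) hji]
    simp [Pi.mulSingle_eq_of_ne hji]

theorem cycleType_sigmaCongrRight [Fintype ι] [∀ i, Fintype (β i)] [∀ i, DecidableEq (β i)]
    (f : ∀ i, Perm (β i)) :
    (sigmaCongrRight f).cycleType = ∑ i, (f i).cycleType := by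
  have hdisj : ((univ : Finset ι) : Set ι).Pairwise fun i j =>
      Disjoint (sigmaCongrRight (Pi.mulSingle i (f i)))
        (sigmaCongrRight (Pi.mulSingle j (f j))) := by
    intro i _ j _ hij ⟨k, b⟩
    rcases eq_or_ne k i with rfl | hki
    · right; simp [Pi.mulSingle_eq_of_ne hij]
    · left; simp [Pi.mulSingle_eq_of_ne hki]
  have hprod : sigmaCongrRight f = univ.noncommProd
      (fun i => sigmaCongrRight (Pi.mulSingle i (f i)))
      (hdisj.imp fun _ _ => Disjoint.commute) := by
    have := map_noncommProd univ (fun i => Pi.mulSingle i (f i))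
      (fun i _ j _ _ => Pi.mulSingle_apply_commute f i j) (sigmaCongrRightHom β)
    rwa [noncommProd_mulSingle] at this
  rw [hprod, Disjoint.cycleType_noncommProd hdisj]
  simp [sigmaCongrRight_mulSingle]

end SigmaCongrRight

theorem exists_semiconj_of_cycleType_eq {α β : Type*} [Fintype α] [DecidableEq α] [Fintype β]
    [DecidableEq β] {σ : Perm α} {τ : Perm β} (hcard : Fintype.card α = Fintype.card β)
    (h : σ.cycleType = τ.cycleType) : ∃ e : α ≃ β, Function.Semiconj e σ τ := by
  let g : β ≃ α := (Fintype.equivOfCardEq hcard).symm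
  let f : β ≃ {_a : α // True} := g.trans (subtypeUnivEquiv fun _ => trivial).symm
  obtain ⟨c, hc⟩ := isConj_iff.mp
    (isConj_of_cycleType_eq (h.trans (cycleType_extendDomain f).symm))
  refine ⟨(c : Perm α).trans g.symm, fun x => g.injective ?_⟩
  have hτ := extendDomain_apply_image τ f (g.symm (c x))
  simp only [f, trans_apply, apply_symm_apply, subtypeUnivEquiv_symm_apply] at hτ
  rw [trans_apply, trans_apply, apply_symm_apply, ← hτ, ← hc]
  simp

end Equiv.Perm

theorem ZMod.cycleType_addRight_one (m : ℕ) [NeZero m] :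
    (Equiv.addRight (1 : ZMod m)).cycleType = ({m} : Multiset ℕ).filter (2 ≤ ·) := by
  obtain ⟨k, rfl⟩ : ∃ k, m = k + 1 := ⟨m - 1, by have := NeZero.ne m; omega⟩
  have hrot : (Equiv.addRight (1 : ZMod (k + 1)) : Perm (Fin (k + 1))) = finRotate (k + 1) :=
    Equiv.ext fun x => (finRotate_apply x).symm
  have hfin : (finRotate (k + 1)).cycleType = ({k + 1} : Multiset ℕ).filter (2 ≤ ·) := by
    rcases k with _ | k
    · rw [zero_add, finRotate_one, ← Perm.one_def, Perm.cycleType_one]; rfl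
    · rw [cycleType_finRotate, Multiset.filter_singleton, if_pos (by omega)]
  exact hrot ▸ hfin

instance Nat.neZero_gcd_left {a b : ℕ} [NeZero a] : NeZero (a.gcd b) :=
  ⟨Nat.gcd_ne_zero_left (NeZero.ne a)⟩

theorem ZMod.exists_natCast_eq_of_castHom_eq {a b : ℕ} [NeZero a] [NeZero b] {x : ZMod a}
    {y : ZMod b}
    (h : castHom (Nat.gcd_dvd_left a b) (ZMod (a.gcd b)) x =
      castHom (Nat.gcd_dvd_right a b) (ZMod (a.gcd b)) y) :
    ∃ t : ℕ, (t : ZMod a) = x ∧ (t : ZMod b) = y := by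
  rw [castHom_apply, castHom_apply, cast_eq_val, cast_eq_val, natCast_eq_natCast_iff] at h
  obtain ⟨t, hta, htb⟩ := Nat.chineseRemainder' h
  refine ⟨t, ?_, ?_⟩
  · rw [← natCast_zmod_val x, natCast_eq_natCast_iff]; exact hta
  · rw [← natCast_zmod_val y, natCast_eq_natCast_iff]; exact htb

/-- The fibres of `c` are exactly the orbits of `⟨σ⟩` acting diagonally on `α × α`. -/
structure ClassifiesPairOrbits {α κ : Type*} (σ : Perm α) (c : α → α → κ) : Prop where
  apply_apply : ∀ x y, c (σ x) (σ y) = c x y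
  exists_pow_of_eq : ∀ {x y x' y'}, c x y = c x' y' → ∃ t : ℕ, (σ ^ t) x = x' ∧ (σ ^ t) y = y'
  surjective : ∀ k, ∃ x y, c x y = k

theorem ClassifiesPairOrbits.comp_semiconj {α β κ : Type*} {σ : Perm α} {τ : Perm β}
    {c : β → β → κ} (hc : ClassifiesPairOrbits τ c) {e : α ≃ β} (he : Function.Semiconj e σ τ) :
    ClassifiesPairOrbits σ fun x y => c (e x) (e y) where
  apply_apply x y := by rw [he x, he y, hc.apply_apply]
  exists_pow_of_eq h := by
    obtain ⟨t, hx, hy⟩ := hc.exists_pow_of_eq h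
    have het : ∀ x, e ((σ ^ t) x) = (τ ^ t) (e x) := fun x => by
      simpa only [Perm.coe_pow] using he.iterate_right t x
    exact ⟨t, e.injective ((het _).trans hx), e.injective ((het _).trans hy)⟩
  surjective k := by
    obtain ⟨x, y, h⟩ := hc.surjective k
    exact ⟨e.symm x, e.symm y, by simpa using h⟩

namespace RotationModel

variable {ι : Type*} (lam : ι → ℕ)

def rotate : Perm (Σ i, ZMod (lam i)) :=
  sigmaCongrRight fun _ => Equiv.addRight 1

theorem rotate_apply (i : ι) (z : ZMod (lam i)) : rotate lam ⟨i, z⟩ = ⟨i, z + 1⟩ :=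
  rfl

theorem rotate_pow_apply (t : ℕ) (i : ι) (z : ZMod (lam i)) :
    (rotate lam ^ t) ⟨i, z⟩ = ⟨i, z + t⟩ := by
  induction t with
  | zero => simp
  | succ t ih =>
    rw [pow_succ', Perm.mul_apply, ih, rotate_apply, Nat.cast_succ, add_assoc]

theorem cycleType_rotate [Fintype ι] [DecidableEq ι] [∀ i, NeZero (lam i)] :
    (rotate lam).cycleType = (univ.val.map lam).filter (2 ≤ ·) := by
  rw [rotate, Perm.cycleType_sigmaCongrRight, ← Multiset.bind_singleton, Multiset.filter_bind]
  simp only [ZMod.cycleType_addRight_one]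
  rfl

abbrev PairClass := Σ p : ι × ι, ZMod ((lam p.1).gcd (lam p.2))

def pairClass (u v : Σ i, ZMod (lam i)) : PairClass lam :=
  ⟨(u.1, v.1), castHom (Nat.gcd_dvd_left _ _) _ u.2 - castHom (Nat.gcd_dvd_right _ _) _ v.2⟩

theorem pairClass_mk (i j : ι) (x : ZMod (lam i)) (y : ZMod (lam j)) :
    pairClass lam ⟨i, x⟩ ⟨j, y⟩ =
      ⟨(i, j), castHom (Nat.gcd_dvd_left _ _) _ x - castHom (Nat.gcd_dvd_right _ _) _ y⟩ :=
  rfl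

theorem card_pairClass [Fintype ι] [∀ i, NeZero (lam i)] :
    Fintype.card (PairClass lam) = ∑ i, ∑ j, (lam i).gcd (lam j) := by
  simp [Fintype.card_sigma, ZMod.card, Fintype.sum_prod_type]

theorem classifiesPairOrbits_pairClass [∀ i, NeZero (lam i)] :
    ClassifiesPairOrbits (rotate lam) (pairClass lam) where
  apply_apply := by
    rintro ⟨i, x⟩ ⟨j, y⟩
    rw [rotate_apply, rotate_apply, pairClass_mk, pairClass_mk, map_add, map_add, map_one,
      map_one, add_sub_add_right_eq_sub]
  exists_pow_of_eq := by
    rintro ⟨i, x⟩ ⟨j, y⟩ ⟨i', x'⟩ ⟨j', y'⟩ h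
    rw [pairClass_mk, pairClass_mk] at h
    obtain ⟨hij, hxy⟩ := Sigma.mk.inj_iff.mp h
    obtain ⟨rfl, rfl⟩ := Prod.ext_iff.mp hij
    have hdiff : castHom (Nat.gcd_dvd_left _ _) (ZMod ((lam i).gcd (lam j))) (x' - x) =
        castHom (Nat.gcd_dvd_right _ _) _ (y' - y) := by
      rw [map_sub, map_sub]
      linear_combination (eq_of_heq hxy).symm
    obtain ⟨t, hx, hy⟩ := ZMod.exists_natCast_eq_of_castHom_eq hdiff
    refine ⟨t, ?_, ?_⟩ <;> simp [rotate_pow_apply, hx, hy]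
  surjective := by
    rintro ⟨⟨i, j⟩, k⟩
    refine ⟨⟨i, (k.val : ZMod (lam i))⟩, ⟨j, 0⟩, ?_⟩
    simp [pairClass_mk]

end RotationModel

theorem HasFullCycleType.cycleType_eq {n s : ℕ} {σ : Perm (Fin n)} {lam : Fin s → ℕ}
    (h : HasFullCycleType σ lam) : σ.cycleType = (List.ofFn lam : Multiset ℕ).filter (2 ≤ ·) := by
  have hparts : σ.partition.parts = List.ofFn lam := by
    rw [Perm.parts_partition, Fintype.card_fin, ← Perm.sum_cycleType]
    exact h
  rw [← Perm.filter_parts_partition_eq_cycleType, hparts]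

section InvariantSubalgebra

variable {R : Type*} [CommRing R] {n : ℕ} {σ : Perm (Fin n)}

theorem mem_invariantSubalgebra {a : Matrix (Fin n) (Fin n) R} :
    a ∈ invariantSubalgebra R σ ↔ ∀ i j, a i j = a (σ i) (σ j) :=
  Iff.rfl

theorem apply_pow_eq_of_mem_invariantSubalgebra {a : Matrix (Fin n) (Fin n) R}
    (ha : a ∈ invariantSubalgebra R σ) (t : ℕ) (i j : Fin n) :
    a ((σ ^ t) i) ((σ ^ t) j) = a i j := by
  induction t with
  | zero => rfl
  | succ t ih => rw [pow_succ', Perm.mul_apply, Perm.mul_apply, ← mem_invariantSubalgebra.mp ha, ih]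

variable (R) in
noncomputable def ClassifiesPairOrbits.invariantSubalgebraEquiv {κ : Type*}
    {c : Fin n → Fin n → κ} (hc : ClassifiesPairOrbits σ c) :
    (κ → R) ≃ₗ[R] invariantSubalgebra R σ where
  toFun f := ⟨Matrix.of fun i j => f (c i j),
    mem_invariantSubalgebra.mpr fun i j => by simp [hc.apply_apply]⟩
  map_add' _ _ := rfl
  map_smul' _ _ := rfl
  invFun a k := (a : Matrix (Fin n) (Fin n) R) (hc.surjective k).choose
    (hc.surjective k).choose_spec.choose
  left_inv f := funext fun k => congrArg f (hc.surjective k).choose_spec.choose_spec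
  right_inv a := by
    ext i j
    obtain ⟨t, hi, hj⟩ := hc.exists_pow_of_eq (hc.surjective (c i j)).choose_spec.choose_spec
    exact (apply_pow_eq_of_mem_invariantSubalgebra a.2 t _ _).symm.trans (by rw [hi, hj])

end InvariantSubalgebra

theorem invariantSubalgebra_free_rank_general (R : Type*) [CommRing R] {n s : ℕ}
    (σ : Equiv.Perm (Fin n)) (lam : Fin s → ℕ)
    (hpos : ∀ i, 1 ≤ lam i)
    (hsum : ∑ i, lam i = n) (hcyc : HasFullCycleType σ lam) :
    Nonempty (Module.Basis (Fin (∑ i : Fin s, ∑ j : Fin s, Nat.gcd (lam i) (lam j))) R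
      (invariantSubalgebra R σ)) := by
  have : ∀ i, NeZero (lam i) := fun i => ⟨Nat.one_le_iff_ne_zero.mp (hpos i)⟩
  obtain ⟨e, he⟩ := Perm.exists_semiconj_of_cycleType_eq (σ := σ) (τ := RotationModel.rotate lam)
    (by simp [ZMod.card, hsum])
    (by rw [hcyc.cycleType_eq, RotationModel.cycleType_rotate, Fin.univ_val_map])
  have hc := (RotationModel.classifiesPairOrbits_pairClass lam).comp_semiconj he
  exact ⟨((Pi.basisFun R _).map (hc.invariantSubalgebraEquiv R)).reindex
    (Fintype.equivFinOfCardEq (RotationModel.card_pairClass lam))⟩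

/-- Let `R` be a commutative unitary ring and `σ ∈ Σ_n` of cycle type `λ = (λ_1,…,λ_s)`
(fixed points counted as parts equal to `1`).  Then `S_n(σ,R)` is a free `R`-module of
rank `ℓ_n(σ) = Σ_{1≤i,j≤s} gcd(λ_i,λ_j)`. -/
theorem invariantSubalgebra_free_rank (R : Type*) [CommRing R] {n s : ℕ}
    (σ : Equiv.Perm (Fin n)) (lam : Fin s → ℕ)
    (hpos : ∀ i, 1 ≤ lam i) (hmono : ∀ i j : Fin s, i ≤ j → lam j ≤ lam i)
    (hsum : ∑ i, lam i = n) (hcyc : HasFullCycleType σ lam) :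
    Nonempty (Module.Basis (Fin (∑ i : Fin s, ∑ j : Fin s, Nat.gcd (lam i) (lam j))) R
      (invariantSubalgebra R σ)) :=
  invariantSubalgebra_free_rank_general R σ lam hpos hsum hcyc
end

section
/- Let R be a unitary ring, let a, s ≥ 1, and let σ ∈ Σ_{sa} have cycle type λ = (a, a, …, a) with a appearing s times (i.e. σ is a product of s disjoint a-cycles). Then S_{sa}(σ,R) is isomorphic as a ring to the matrix ring M_s(R[C_a]) over the group ring of the cyclic group C_a of order a. -/
open Matrix

/-!
Identify `Fin (s * a)` with `Fin s × C_a` so that `σ` becomes the shift `(i, h) ↦ (i, g * h)` by a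
generator `g` of `C_a`: both permutations have the same cycle type, hence are conjugate. A matrix
invariant under the shift satisfies `A (i, h) (j, h') = A (i, 1) (j, h⁻¹ * h')`, so it is the image
of the matrix over `R[C_a]` with `(i, j)` entry `h ↦ A (i, 1) (j, h)` under the blockwise regular
representation `R[C_a] → M_a(R)`, `x ↦ (x (h⁻¹ * h'))_{h, h'}`, an injective ring homomorphism.
-/

namespace Equiv.Perm

variable {α β : Type*} [Fintype α] [DecidableEq α] [Fintype β] [DecidableEq β]

theorem cycleType_permCongr (e : α ≃ β) (τ : Perm α) :
    (e.permCongr τ).cycleType = τ.cycleType := by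
  have htrue : ∀ x : β, (fun _ => True) x := fun _ => trivial
  have : e.permCongr τ = τ.extendDomain (e.trans (Equiv.subtypeUnivEquiv htrue).symm) := by
    ext x
    rw [extendDomain_apply_subtype _ _ (htrue x)]
    rfl
  rw [this, cycleType_extendDomain]

theorem exists_equiv_conj_of_parts_partition_eq {σ : Perm α} {τ : Perm β}
    (h : σ.partition.parts = τ.partition.parts) : ∃ e : β ≃ α, ∀ x, σ (e x) = e (τ x) := by
  have hcard : Fintype.card β = Fintype.card α := by
    rw [← τ.partition.parts_sum, ← h, σ.partition.parts_sum]
  let e₀ := Fintype.equivOfCardEq hcard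
  have hconj : IsConj σ (e₀.permCongr τ) := by
    rw [isConj_iff_cycleType_eq, cycleType_permCongr, ← filter_parts_partition_eq_cycleType, h,
      filter_parts_partition_eq_cycleType]
  obtain ⟨c, hc⟩ := isConj_iff.1 hconj
  refine ⟨e₀.trans (c⁻¹ : Perm α), fun x => ?_⟩
  simpa [mul_assoc] using congrArg (fun π : Perm α => (c⁻¹ * π) (e₀ x)) hc

end Equiv.Perm

theorem hasFullCycleType_iff_parts_partition {n s : ℕ} {σ : Equiv.Perm (Fin n)} {lam : Fin s → ℕ} :
    HasFullCycleType σ lam ↔ σ.partition.parts = (List.ofFn lam : Multiset ℕ) := by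
  rw [HasFullCycleType, Equiv.Perm.parts_partition, Fintype.card_fin, Equiv.Perm.sum_cycleType]

section BlockShift

variable (ι : Type*) {G : Type*} [Group G]

def blockShift : G →* Equiv.Perm (ι × G) where
  toFun g := (Equiv.refl ι).prodCongr (Equiv.mulLeft g)
  map_one' := by ext <;> simp
  map_mul' g h := by ext <;> simp [mul_assoc]

variable {ι}

@[simp]
lemma blockShift_apply (g : G) (p : ι × G) : blockShift ι g p = (p.1, g * p.2) := rfl

lemma blockShift_zpow_apply (g : G) (m : ℤ) (p : ι × G) :
    (blockShift ι g ^ m) p = (p.1, g ^ m * p.2) := by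
  rw [← map_zpow, blockShift_apply]

lemma support_blockShift [Fintype ι] [DecidableEq ι] [Fintype G] [DecidableEq G] {g : G}
    (hg₁ : g ≠ 1) : (blockShift ι g).support = Finset.univ :=
  Finset.eq_univ_of_forall fun p => by simp [Equiv.Perm.mem_support, Prod.ext_iff, hg₁]

variable {g : G} (hg : ∀ k, k ∈ Subgroup.zpowers g)
include hg

lemma sameCycle_blockShift_iff {p q : ι × G} : (blockShift ι g).SameCycle p q ↔ p.1 = q.1 := by
  refine ⟨fun ⟨m, hm⟩ => by simpa [blockShift_zpow_apply] using congrArg Prod.fst hm,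
    fun h => ?_⟩
  obtain ⟨m, hm⟩ := Subgroup.mem_zpowers_iff.1 (hg (q.2 * p.2⁻¹))
  exact ⟨m, by rw [blockShift_zpow_apply, hm, inv_mul_cancel_right, h]⟩

variable [Fintype ι] [DecidableEq ι] [Fintype G] [DecidableEq G]

lemma cycleType_blockShift (hg₁ : g ≠ 1) :
    (blockShift ι g).cycleType = Multiset.replicate (Fintype.card ι) (Fintype.card G) := by
  have hlength : ∀ r ∈ (blockShift ι g).cycleType, r = Fintype.card G := by
    intro r hr
    rw [Equiv.Perm.cycleType_def, Multiset.mem_map] at hr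
    obtain ⟨c, hc, rfl⟩ := hr
    obtain ⟨x, hx⟩ := (Equiv.Perm.mem_cycleFactorsFinset_iff.1 hc).1.nonempty_support
    have hcycle : c.support = {x.1} ×ˢ Finset.univ := by
      ext y
      rw [Equiv.Perm.cycle_is_cycleOf hx hc, Equiv.Perm.mem_support_cycleOf_iff,
        sameCycle_blockShift_iff hg, support_blockShift hg₁]
      simp [Prod.ext_iff, eq_comm]
    simp [hcycle]
  have hsum : (blockShift ι g).cycleType.sum = Fintype.card ι * Fintype.card G := by
    rw [Equiv.Perm.sum_cycleType, support_blockShift hg₁, Finset.card_univ, Fintype.card_prod]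
  rw [Multiset.eq_replicate_card.2 hlength] at hsum ⊢
  rw [Multiset.sum_replicate, smul_eq_mul] at hsum
  rw [Nat.eq_of_mul_eq_mul_right Fintype.card_pos hsum]

lemma parts_partition_blockShift :
    (blockShift ι g).partition.parts = Multiset.replicate (Fintype.card ι) (Fintype.card G) := by
  rw [Equiv.Perm.parts_partition]
  rcases eq_or_ne g 1 with rfl | hg₁
  · have hG : Fintype.card G = 1 := Fintype.card_eq_one_iff.2 ⟨1, fun k => by simpa using hg k⟩
    simp [hG]
  · simp [cycleType_blockShift hg hg₁, support_blockShift hg₁]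

end BlockShift

namespace MonoidAlgebra

variable {R G : Type*} [Semiring R] [Group G] [Fintype G]

lemma coeff_mul_eq_sum (x y : MonoidAlgebra R G) (g : G) :
    (x * y).coeff g = ∑ h, x.coeff h * y.coeff (h⁻¹ * g) :=
  (coeff_mul_apply_left x y g).trans (Finsupp.sum_fintype _ _ fun _ => zero_mul _)

variable [DecidableEq G]

variable (R) in
/-- The matrix of `y ↦ y * x` acting on row vectors `y : G → R`. -/
def regularMatrix : MonoidAlgebra R G →+* Matrix G G R where
  toFun x := Matrix.of fun g h => x.coeff (g⁻¹ * h)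
  map_one' := by
    ext g h
    simp [one_def, Matrix.one_apply, Finsupp.single_apply, inv_mul_eq_one, eq_comm]
  map_mul' x y := by
    ext g h
    simp only [Matrix.of_apply, Matrix.mul_apply, coeff_mul_eq_sum]
    exact Fintype.sum_equiv (Equiv.mulLeft g) _ _ fun t => by simp [mul_assoc]
  map_zero' := rfl
  map_add' _ _ := rfl

@[simp]
lemma regularMatrix_apply (x : MonoidAlgebra R G) (g h : G) :
    regularMatrix R x g h = x.coeff (g⁻¹ * h) := rfl

lemma regularMatrix_injective : Function.Injective (regularMatrix R (G := G)) := fun x y hxy =>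
  ext <| Finsupp.ext fun h => by simpa using congr_fun₂ hxy 1 h

end MonoidAlgebra

section BlockRegular

open MonoidAlgebra

variable (R : Type*) {ι G κ : Type*} [Semiring R] [Fintype ι] [DecidableEq ι] [Group G]
  [Fintype G] [DecidableEq G] [Fintype κ] [DecidableEq κ]

noncomputable def blockRegularMatrix (e : ι × G ≃ κ) :
    Matrix ι ι (MonoidAlgebra R G) →+* Matrix κ κ R :=
  (reindexRingEquiv R e : Matrix (ι × G) (ι × G) R →+* Matrix κ κ R).comp <|
    (compRingEquiv ι G R : Matrix ι ι (Matrix G G R) →+* _).comp (regularMatrix R).mapMatrix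

variable {R}

@[simp]
lemma blockRegularMatrix_apply (e : ι × G ≃ κ) (M : Matrix ι ι (MonoidAlgebra R G))
    (p q : ι × G) :
    blockRegularMatrix R e M (e p) (e q) = (M p.1 q.1).coeff (p.2⁻¹ * q.2) := by
  simp [blockRegularMatrix]

lemma blockRegularMatrix_injective (e : ι × G ≃ κ) :
    Function.Injective (blockRegularMatrix R e) :=
  (reindexRingEquiv R e).injective.comp <| (compRingEquiv ι G R).injective.comp <|
    Matrix.map_injective regularMatrix_injective

end BlockRegular

section InvariantSubring

open MonoidAlgebra

variable {R : Type*} [Ring R] {ι G : Type*} [Group G] [Fintype G] {n : ℕ}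
  {σ : Equiv.Perm (Fin n)} {e : ι × G ≃ Fin n} {g : G} (he : ∀ p, σ (e p) = e (blockShift ι g p))
include he

lemma apply_blockShift_of_mem_invariantSubring {A : Matrix (Fin n) (Fin n) R}
    (hA : A ∈ invariantSubring R σ) {k : G} (hk : k ∈ Subgroup.zpowers g) (p q : ι × G) :
    A (e (blockShift ι k p)) (e (blockShift ι k q)) = A (e p) (e q) := by
  obtain ⟨m, rfl⟩ := (Submonoid.mem_powers_iff _ _).1 (mem_powers_iff_mem_zpowers.2 hk)
  clear hk
  induction m generalizing p q with
  | zero => simp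
  | succ m ih =>
    rw [pow_succ', map_mul, Equiv.Perm.mul_apply, Equiv.Perm.mul_apply, ← he, ← he, ← hA, ih]

variable [Fintype ι] [DecidableEq ι] [DecidableEq G]

lemma range_blockRegularMatrix (hg : ∀ k, k ∈ Subgroup.zpowers g) :
    (blockRegularMatrix R e).range = invariantSubring R σ := by
  ext A
  constructor
  · rintro ⟨M, rfl⟩ x y
    obtain ⟨p, rfl⟩ := e.surjective x
    obtain ⟨q, rfl⟩ := e.surjective y
    simp [he, mul_assoc]
  · intro hA
    refine ⟨Matrix.of fun i j =>
      ofCoeff (Finsupp.equivFunOnFinite.symm fun k => A (e (i, 1)) (e (j, k))), ?_⟩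
    ext x y
    obtain ⟨p, rfl⟩ := e.surjective x
    obtain ⟨q, rfl⟩ := e.surjective y
    simpa using (apply_blockShift_of_mem_invariantSubring he hA (hg p.2)
      (p.1, 1) (q.1, p.2⁻¹ * q.2)).symm

noncomputable def invariantSubringEquiv (hg : ∀ k, k ∈ Subgroup.zpowers g) :
    invariantSubring R σ ≃+* Matrix ι ι (MonoidAlgebra R G) :=
  (RingEquiv.subringCongr (range_blockRegularMatrix he hg).symm).trans
    (RingEquiv.ofBijective (blockRegularMatrix R e).rangeRestrict
      ⟨fun _ _ h => blockRegularMatrix_injective e (congrArg Subtype.val h),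
        (blockRegularMatrix R e).rangeRestrict_surjective⟩).symm

end InvariantSubring

lemma ZMod.mem_zpowers_ofAdd_one (a : ℕ) (k : Multiplicative (ZMod a)) :
    k ∈ Subgroup.zpowers (Multiplicative.ofAdd 1) :=
  Subgroup.mem_zpowers_iff.2 ⟨(Multiplicative.toAdd k).cast, by
    rw [← ofAdd_zsmul, zsmul_one, ZMod.intCast_zmod_cast, ofAdd_toAdd]⟩

theorem invariantSubring_constant_cycleType_general (R : Type*) [Ring R] (a s : ℕ)
    (ha : 1 ≤ a) (σ : Equiv.Perm (Fin (s * a)))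
    (hcyc : HasFullCycleType σ (fun _ : Fin s => a)) :
    Nonempty ((invariantSubring R σ) ≃+*
      Matrix (Fin s) (Fin s) (MonoidAlgebra R (Multiplicative (ZMod a)))) := by
  have : NeZero a := ⟨by omega⟩
  have hg := ZMod.mem_zpowers_ofAdd_one a
  have hparts : σ.partition.parts =
      (blockShift (Fin s) (Multiplicative.ofAdd (1 : ZMod a))).partition.parts := by
    rw [hasFullCycleType_iff_parts_partition.1 hcyc, parts_partition_blockShift hg,
      List.ofFn_const, Multiset.coe_replicate, Fintype.card_fin, Fintype.card_multiplicative,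
      ZMod.card]
  obtain ⟨e, he⟩ := Equiv.Perm.exists_equiv_conj_of_parts_partition_eq hparts
  exact ⟨invariantSubringEquiv he hg⟩

/-- Let `R` be a unitary ring, `a, s ≥ 1`, and let `σ ∈ Σ_{sa}` have cycle type
`(a, a, …, a)` with `a` appearing `s` times.  Then `S_{sa}(σ,R)` is isomorphic as a ring
to the matrix ring `M_s(R[C_a])` over the group ring of the cyclic group of order `a`. -/
theorem invariantSubring_constant_cycleType (R : Type*) [Ring R] (a s : ℕ)
    (ha : 1 ≤ a) (hs : 1 ≤ s) (σ : Equiv.Perm (Fin (s * a)))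
    (hcyc : HasFullCycleType σ (fun _ : Fin s => a)) :
    Nonempty ((invariantSubring R σ) ≃+*
      Matrix (Fin s) (Fin s) (MonoidAlgebra R (Multiplicative (ZMod a)))) :=
  invariantSubring_constant_cycleType_general R a s ha σ hcyc
end

section
/- Let λ ∼ μ be polynomial equivalent partitions in P(s,n) and γ ∼ δ polynomial equivalent partitions in P(t,m). If there is a positive integer d with gcd(λ_i, γ_j) = d = gcd(μ_p, δ_q) for all 1 ≤ i,p ≤ s and 1 ≤ j,q ≤ t, then (λ,γ) ∼ (μ,δ) in P(s+t, n+m). -/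
/-- `g_i(λ) = Σ_{1 ≤ k_1 < … < k_i ≤ s} gcd(λ_{k_1},…,λ_{k_i})`. -/
def gPart {s : ℕ} (lam : Fin s → ℕ) (i : ℕ) : ℕ :=
  ∑ T ∈ Finset.univ.powersetCard i, T.gcd lam

lemma gcd_disjSum_elim {α β : Type*} (s : Finset α) (t : Finset β) (f : α → ℕ) (g : β → ℕ) :
    (s.disjSum t).gcd (Sum.elim f g) = Nat.gcd (s.gcd f) (t.gcd g) := by
  classical
  have hu : s.disjSum t = s.map Function.Embedding.inl ∪ t.map Function.Embedding.inr := by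
    ext x; simp [Finset.mem_disjSum, eq_comm]
  rw [hu, Finset.gcd_union, Finset.map_eq_image, Finset.map_eq_image,
    Finset.gcd_image, Finset.gcd_image]
  rfl

/-- number of mixed pairs -/
def mixedCount (s t i : ℕ) : ℕ :=
  ((Finset.univ : Finset (Finset (Fin s) × Finset (Fin t))).filter
    (fun p => (p.1.card + p.2.card = i ∧ p.1 ≠ ∅) ∧ p.2 ≠ ∅)).card

lemma gPart_eq_zero {s : ℕ} (f : Fin s → ℕ) {i : ℕ} (h : s < i) : gPart f i = 0 := by
  unfold gPart
  rw [Finset.powersetCard_eq_empty.2 (by simpa using h), Finset.sum_empty]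

lemma gPart_append {s t : ℕ} (f : Fin s → ℕ) (g : Fin t → ℕ) {d : ℕ}
    (h : ∀ a b, Nat.gcd (f a) (g b) = d) {i : ℕ} (hi : 1 ≤ i) :
    gPart (Fin.append f g) i = gPart f i + gPart g i + mixedCount s t i * d := by
  classical
  have hfg : (Fin.append f g) ∘ finSumFinEquiv = Sum.elim f g := by
    funext x; rcases x with a | b <;> simp
  have step1 : gPart (Fin.append f g) i =
      ∑ U ∈ (Finset.univ : Finset (Fin s ⊕ Fin t)).powersetCard i,
        Nat.gcd (U.toLeft.gcd f) (U.toRight.gcd g) := by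
    unfold gPart
    rw [show (Finset.univ : Finset (Fin (s + t))) =
        (Finset.univ : Finset (Fin s ⊕ Fin t)).map finSumFinEquiv.toEmbedding from
        (Finset.map_univ_equiv _).symm,
      Finset.powersetCard_map, Finset.sum_map]
    refine Finset.sum_congr rfl fun U _ => ?_
    show (U.map finSumFinEquiv.toEmbedding).gcd (Fin.append f g) = _
    rw [Finset.map_eq_image, Finset.gcd_image]
    calc U.gcd (Fin.append f g ∘ finSumFinEquiv)
        = (U.toLeft.disjSum U.toRight).gcd (Sum.elim f g) := by
          rw [Finset.toLeft_disjSum_toRight, hfg]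
      _ = Nat.gcd (U.toLeft.gcd f) (U.toRight.gcd g) := gcd_disjSum_elim _ _ _ _
  have step2 : ∑ U ∈ (Finset.univ : Finset (Fin s ⊕ Fin t)).powersetCard i,
        Nat.gcd (U.toLeft.gcd f) (U.toRight.gcd g)
      = ∑ p ∈ Finset.univ.filter
          (fun p : Finset (Fin s) × Finset (Fin t) => p.1.card + p.2.card = i),
        Nat.gcd (p.1.gcd f) (p.2.gcd g) := by
    refine Finset.sum_nbij' (fun U => (U.toLeft, U.toRight)) (fun p => p.1.disjSum p.2)
      ?_ ?_ ?_ ?_ ?_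
    · intro U hU
      simp [Finset.card_toLeft_add_card_toRight, Finset.mem_powersetCard_univ.1 hU]
    · intro p hp
      simp only [Finset.mem_filter, Finset.mem_univ, true_and] at hp
      simp [Finset.mem_powersetCard_univ, Finset.card_disjSum, hp]
    · intro U hU; simp [Finset.toLeft_disjSum_toRight]
    · intro p hp; simp
    · intro U hU; rfl
  rw [step1, step2]
  rw [← Finset.sum_filter_add_sum_filter_not _ (fun p => p.1 = ∅),
    ← Finset.sum_filter_add_sum_filter_not
      ((Finset.univ.filter (fun p : Finset (Fin s) × Finset (Fin t) =>
        p.1.card + p.2.card = i)).filter (fun p => ¬ p.1 = ∅)) (fun p => p.2 = ∅)]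
  have hA : ∑ p ∈ (Finset.univ.filter (fun p : Finset (Fin s) × Finset (Fin t) =>
        p.1.card + p.2.card = i)).filter (fun p => p.1 = ∅),
      Nat.gcd (p.1.gcd f) (p.2.gcd g) = gPart g i := by
    unfold gPart
    refine Finset.sum_nbij' (fun p => p.2) (fun B => (∅, B)) ?_ ?_ ?_ ?_ ?_
    · intro p hp
      simp only [Finset.mem_filter, Finset.mem_univ, true_and] at hp
      rw [Finset.mem_powersetCard_univ]
      rw [hp.2] at hp
      simpa using hp.1
    · intro B hB
      simp only [Finset.mem_filter, Finset.mem_univ, true_and]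
      simpa using Finset.mem_powersetCard_univ.1 hB
    · intro p hp
      simp only [Finset.mem_filter] at hp
      exact Prod.ext hp.2.symm rfl
    · intro B hB; rfl
    · intro p hp
      simp only [Finset.mem_filter] at hp
      rw [hp.2, Finset.gcd_empty, Nat.gcd_zero_left]
  have hB : ∑ p ∈ ((Finset.univ.filter (fun p : Finset (Fin s) × Finset (Fin t) =>
        p.1.card + p.2.card = i)).filter (fun p => ¬ p.1 = ∅)).filter (fun p => p.2 = ∅),
      Nat.gcd (p.1.gcd f) (p.2.gcd g) = gPart f i := by
    unfold gPart
    refine Finset.sum_nbij' (fun p => p.1) (fun A => (A, ∅)) ?_ ?_ ?_ ?_ ?_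
    · intro p hp
      simp only [Finset.mem_filter, Finset.mem_univ, true_and] at hp
      rw [Finset.mem_powersetCard_univ]
      have hc := hp.1.1
      rw [hp.2] at hc
      simpa using hc
    · intro A hA2
      have hcard : A.card = i := Finset.mem_powersetCard_univ.1 hA2
      refine Finset.mem_filter.2 ⟨Finset.mem_filter.2 ⟨Finset.mem_filter.2
        ⟨Finset.mem_univ _, ?_⟩, ?_⟩, rfl⟩
      · simpa using hcard
      · intro hemp
        have hemp' : A = ∅ := hemp
        rw [hemp', Finset.card_empty] at hcard
        omega
    · intro p hp
      simp only [Finset.mem_filter] at hp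
      exact Prod.ext rfl hp.2.symm
    · intro A hA2; rfl
    · intro p hp
      simp only [Finset.mem_filter] at hp
      rw [hp.2, Finset.gcd_empty, Nat.gcd_zero_right]
  have hC : ∑ p ∈ ((Finset.univ.filter (fun p : Finset (Fin s) × Finset (Fin t) =>
        p.1.card + p.2.card = i)).filter (fun p => ¬ p.1 = ∅)).filter (fun p => ¬ p.2 = ∅),
      Nat.gcd (p.1.gcd f) (p.2.gcd g) = mixedCount s t i * d := by
    have hterm : ∀ p ∈ ((Finset.univ.filter (fun p : Finset (Fin s) × Finset (Fin t) =>
        p.1.card + p.2.card = i)).filter (fun p => ¬ p.1 = ∅)).filter (fun p => ¬ p.2 = ∅),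
        Nat.gcd (p.1.gcd f) (p.2.gcd g) = d := by
      intro p hp
      simp only [Finset.mem_filter] at hp
      obtain ⟨a, ha⟩ := Finset.nonempty_iff_ne_empty.2 hp.1.2
      obtain ⟨b, hb⟩ := Finset.nonempty_iff_ne_empty.2 hp.2
      refine Nat.dvd_antisymm ?_ ?_
      · have h1 : Nat.gcd (p.1.gcd f) (p.2.gcd g) ∣ f a :=
          (Nat.gcd_dvd_left _ _).trans (Finset.gcd_dvd ha)
        have h2 : Nat.gcd (p.1.gcd f) (p.2.gcd g) ∣ g b :=
          (Nat.gcd_dvd_right _ _).trans (Finset.gcd_dvd hb)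
        exact h a b ▸ Nat.dvd_gcd h1 h2
      · refine Nat.dvd_gcd ?_ ?_
        · exact Finset.dvd_gcd fun k hk => h k b ▸ Nat.gcd_dvd_left _ _
        · exact Finset.dvd_gcd fun k hk => h a k ▸ Nat.gcd_dvd_right _ _
    rw [Finset.sum_congr rfl hterm, Finset.sum_const, smul_eq_mul]
    congr 1
    unfold mixedCount
    rw [Finset.filter_filter, Finset.filter_filter]
    congr 1
    ext p
    simp only [Finset.mem_filter, Finset.mem_univ, true_and, ne_eq]
    tauto
  rw [hA, hB, hC]
  omega

/-- Let `λ ∼ μ` be polynomial equivalent partitions in `P(s,n)` and `γ ∼ δ` polynomial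
equivalent partitions in `P(t,m)`.  If there is `d ≥ 1` with
`gcd(λ_i,γ_j) = d = gcd(μ_p,δ_q)` for all `i, p, j, q`, then `(λ,γ) ∼ (μ,δ)` in
`P(s+t, n+m)`. -/
theorem polyEquiv_append {n m s t : ℕ} (lam mu : Fin s → ℕ) (gam delt : Fin t → ℕ)
    (hlpos : ∀ i, 1 ≤ lam i) (hlmono : ∀ i j : Fin s, i ≤ j → lam j ≤ lam i)
    (hlsum : ∑ i, lam i = n)
    (hmpos : ∀ i, 1 ≤ mu i) (hmmono : ∀ i j : Fin s, i ≤ j → mu j ≤ mu i)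
    (hmsum : ∑ i, mu i = n)
    (hgpos : ∀ j, 1 ≤ gam j) (hgmono : ∀ i j : Fin t, i ≤ j → gam j ≤ gam i)
    (hgsum : ∑ j, gam j = m)
    (hdpos : ∀ j, 1 ≤ delt j) (hdmono : ∀ i j : Fin t, i ≤ j → delt j ≤ delt i)
    (hdsum : ∑ j, delt j = m)
    (hlm : ∀ i, 1 ≤ i → i ≤ s → gPart lam i = gPart mu i)
    (hgd : ∀ i, 1 ≤ i → i ≤ t → gPart gam i = gPart delt i)
    (d : ℕ) (hd : 1 ≤ d)
    (h1 : ∀ (i : Fin s) (j : Fin t), Nat.gcd (lam i) (gam j) = d)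
    (h2 : ∀ (p : Fin s) (q : Fin t), Nat.gcd (mu p) (delt q) = d) :
    ∀ i, 1 ≤ i → i ≤ s + t →
      gPart (Fin.append lam gam) i = gPart (Fin.append mu delt) i := by
  have hlm' : ∀ k, 1 ≤ k → gPart lam k = gPart mu k := by
    intro k hk
    by_cases hks : k ≤ s
    · exact hlm k hk hks
    · rw [gPart_eq_zero _ (by omega), gPart_eq_zero _ (by omega)]
  have hgd' : ∀ k, 1 ≤ k → gPart gam k = gPart delt k := by
    intro k hk
    by_cases hkt : k ≤ t
    · exact hgd k hk hkt
    · rw [gPart_eq_zero _ (by omega), gPart_eq_zero _ (by omega)]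
  intro i hi _
  rw [gPart_append lam gam h1 hi, gPart_append mu delt h2 hi, hlm' i hi, hgd' i hi]
end
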